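/- Let 𝔥₁ and 𝔥₂ be finite-dimensional real Leibniz algebras and let α : 𝔥₁ → 𝔥₂ be a homomorphism of Leibniz algebras (a linear map with α([X,Y]) = [α(X),α(Y)] for all X,Y ∈ 𝔥₁). Then α is a morphism for the exponential rack structures: for all X, Y ∈ 𝔥₁, α(exp(ad_X)(Y)) = exp(ad_{α(X)})(α(Y)), i.e. α(X ▷ Y) = α(X) ▷ α(Y) where X ▷ Y := exp(ad_X)(Y). -/

import Mathlib

open NormedSpace

namespace ContinuousLinearMap

variable {𝕜 E F : Type*} [RCLike 𝕜]
  [NormedAddCommGroup E] [NormedSpace 𝕜 E] [NormedAddCommGroup F] [NormedSpace 𝕜 F]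

theorem comp_pow_of_comp_eq (f : E →L[𝕜] F) {A : E →L[𝕜] E} {B : F →L[𝕜] F}
    (h : f ∘L A = B ∘L f) (n : ℕ) : f ∘L (A ^ n) = (B ^ n) ∘L f := by
  induction n with
  | zero => rfl
  | succ n ih => rw [pow_succ, pow_succ, mul_def, mul_def, ← comp_assoc, ih, comp_assoc, h,
      comp_assoc]

variable [CompleteSpace E] [CompleteSpace F]

/-- Pushing the exponential series of `A` forward along `T ↦ f ∘L T` and that of `B` along
`S ↦ S ∘L f` gives termwise equal series. -/
theorem comp_exp_of_comp_eq (f : E →L[𝕜] F) {A : E →L[𝕜] E} {B : F →L[𝕜] F}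
    (h : f ∘L A = B ∘L f) : f ∘L exp A = exp B ∘L f := by
  have hA := (exp_series_hasSum_exp' (𝕂 := 𝕜) A).mapL (compL 𝕜 E E F f)
  have hB := (exp_series_hasSum_exp' (𝕂 := 𝕜) B).mapL ((compL 𝕜 E F F).flip f)
  simp only [compL_apply, flip_apply, comp_smul, smul_comp, comp_pow_of_comp_eq f h] at hA hB
  exact hA.unique hB

end ContinuousLinearMap

theorem leibniz_hom_is_rack_morphism_general
    {V W : Type*}
    [NormedAddCommGroup V] [NormedSpace ℝ V] [FiniteDimensional ℝ V]
    [NormedAddCommGroup W] [NormedSpace ℝ W] [FiniteDimensional ℝ W]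
    (b₁ : V →L[ℝ] V →L[ℝ] V)
    (b₂ : W →L[ℝ] W →L[ℝ] W)
    (α : V →ₗ[ℝ] W)
    (hα : ∀ X Y : V, α (b₁ X Y) = b₂ (α X) (α Y)) :
    ∀ X Y : V, α (exp (b₁ X) Y) = exp (b₂ (α X)) (α Y) := by
  intro X Y
  have hcomm : LinearMap.toContinuousLinearMap α ∘L b₁ X =
      b₂ (α X) ∘L LinearMap.toContinuousLinearMap α := by
    ext Z
    exact hα X Z
  exact congr($(ContinuousLinearMap.comp_exp_of_comp_eq _ hcomm) Y)

/-- A homomorphism `α : 𝔥₁ → 𝔥₂` of finite-dimensional real Leibniz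
algebras is a morphism for the exponential rack structures:
`α(exp(ad_X)(Y)) = exp(ad_{α X})(α Y)` for all `X, Y ∈ 𝔥₁`. -/
theorem leibniz_hom_is_rack_morphism
    {V W : Type*}
    [NormedAddCommGroup V] [NormedSpace ℝ V] [FiniteDimensional ℝ V]
    [NormedAddCommGroup W] [NormedSpace ℝ W] [FiniteDimensional ℝ W]
    (b₁ : V →L[ℝ] V →L[ℝ] V)
    (hLeib₁ : ∀ X Y Z : V, b₁ X (b₁ Y Z) = b₁ (b₁ X Y) Z + b₁ Y (b₁ X Z))
    (b₂ : W →L[ℝ] W →L[ℝ] W)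
    (hLeib₂ : ∀ X Y Z : W, b₂ X (b₂ Y Z) = b₂ (b₂ X Y) Z + b₂ Y (b₂ X Z))
    (α : V →ₗ[ℝ] W)
    (hα : ∀ X Y : V, α (b₁ X Y) = b₂ (α X) (α Y)) :
    ∀ X Y : V, α (exp (b₁ X) Y) = exp (b₂ (α X)) (α Y) :=
  leibniz_hom_is_rack_morphism_general b₁ b₂ α hα
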